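/- arXiv:1606.00132 — 3 statements merged into one kernel-verified Lean document; each statement's English description precedes it below -/
import Mathlib

section
/- Let Λ be a compact metric space and f : Λ → Λ an expansive homeomorphism with the periodic gluing orbit property. If h is a homeomorphism commuting with f that preserves every periodic orbit of f (i.e., h(O_f(x)) = O_f(x) for every periodic point x), then h = f^k for some integer k. -/
/-!
Since `h` commutes with `f` and preserves the (finite) orbit `O` of a periodic point `x₀`, it
carries any orbit segment shadowing `x₀` to one near `O`. Glue a long segment of `x₀`, a marker
point `u ∉ O`, windows around finitely many points `v a`, and `u` again into one periodic orbit
`Z`. Then `h Z = f^γ Z`, and since the image of the `x₀`-segment must avoid both markers,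
`γ` agrees modulo the period with some `k`, `|k| ≤ K`, where `K` bounds the gluing gaps. So `h`
equals `f^k` at the point shadowing each window, and continuity of `h` with expansivity gives
`d(h (v a), f^k (v a)) < e` for all `a` at once.
As `k` ranges over a finite set, one `k` serves every point, and expansivity upgrades
`d(h, f^k) ≤ e` to `h = f^k`.
-/

open Function Set Filter Topology Metric

variable {X : Type*} [MetricSpace X] [CompactSpace X]

/-- The `n`-th iterate (`n ∈ ℤ`) of a homeomorphism `f`. -/
def zpowIter (f : X ≃ₜ X) (n : ℤ) : X → X := ⇑(f.toEquiv ^ n : Equiv.Perm X)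

/-- `x` is a periodic point of `f`. -/
def IsPer (f : X ≃ₜ X) (x : X) : Prop := ∃ n : ℕ, 0 < n ∧ (⇑f)^[n] x = x

/-- The full (two-sided) orbit of `x` under `f`. -/
def zOrbit (f : X ≃ₜ X) (x : X) : Set X := {y | ∃ n : ℤ, zpowIter f n x = y}

/-- `f` is expansive: some `ε > 0` separates any two distinct orbits. -/
def Expansive (f : X ≃ₜ X) : Prop :=
  ∃ e : ℝ, 0 < e ∧ ∀ x y : X, x ≠ y → ∃ n : ℤ, e < dist (zpowIter f n x) (zpowIter f n y)

/-- The periodic gluing orbit property: any finite collection of orbit segments can be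
`ε`-shadowed by a single periodic orbit, with gap times bounded by `K(ε)`. -/
def PeriodicGluing (f : X ≃ₜ X) : Prop :=
  ∀ e : ℝ, 0 < e → ∃ K : ℕ, 0 < K ∧
    ∀ (k : ℕ) (x : ℕ → X) (n : ℕ → ℕ), (∀ i, i ≤ k → 1 ≤ n i) →
      ∃ (p : ℕ → ℕ) (z : X),
        (∀ i, i ≤ k → 1 ≤ p i ∧ p i ≤ K) ∧
        (∀ i, i ≤ k → ∀ j, j ≤ n i →
          dist ((⇑f)^[j + ∑ l ∈ Finset.range i, (n l + p l)] z) ((⇑f)^[j] (x i)) < e) ∧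
        (⇑f)^[∑ l ∈ Finset.range (k + 1), (n l + p l)] z = z

theorem exists_forall_of_forall_finite_family {α : Type*} {P : ℤ → α → Prop} {K : ℕ}
    (H : ∀ (r : ℕ) (v : ℕ → α), ∃ k : ℤ, k.natAbs ≤ K ∧ ∀ a < r, P k (v a)) :
    ∃ k : ℤ, ∀ x, P k x := by
  by_contra hne
  push Not at hne
  choose w hw using hne
  obtain ⟨k, hk, hP⟩ := H (2 * K + 1) fun a => w (a - K)
  have hidx : (((k + K).toNat : ℕ) : ℤ) - K = k := by omega
  have hwk := hP (k + K).toNat (by omega)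
  rw [hidx] at hwk
  exact hw k hwk

section

omit [CompactSpace X]

section Iterates

variable (f : X ≃ₜ X)

theorem zpowIter_eq_coe_zpow (n : ℤ) : zpowIter f n = ⇑(f ^ n) :=
  let toPerm : (X ≃ₜ X) →* Equiv.Perm X :=
    { toFun := Homeomorph.toEquiv, map_one' := rfl, map_mul' := fun _ _ => rfl }
  congrArg DFunLike.coe (map_zpow toPerm f n).symm

theorem zpowIter_add (m n : ℤ) (x : X) :
    zpowIter f (m + n) x = zpowIter f m (zpowIter f n x) := by
  simp [zpowIter_eq_coe_zpow, zpow_add]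

theorem zpowIter_zero (x : X) : zpowIter f 0 x = x := rfl

theorem zpowIter_natCast (n : ℕ) : zpowIter f n = (⇑f)^[n] := by
  simp [zpowIter, Equiv.Perm.coe_pow]

theorem continuous_zpowIter (n : ℤ) : Continuous (zpowIter f n) := by
  rw [zpowIter_eq_coe_zpow]
  exact (f ^ n).continuous

theorem mem_zOrbit_self (x : X) : x ∈ zOrbit f x := ⟨0, rfl⟩

variable {f}

theorem zpowIter_comm {g : X ≃ₜ X} (hg : Commute g f) (n : ℤ) (x : X) :
    g (zpowIter f n x) = zpowIter f n (g x) := by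
  simpa [zpowIter_eq_coe_zpow] using DFunLike.congr_fun (hg.zpow_right n) x

theorem zpowIter_zpowIter_comm (m n : ℤ) (x : X) :
    zpowIter f m (zpowIter f n x) = zpowIter f n (zpowIter f m x) := by
  rw [← zpowIter_add, add_comm, zpowIter_add]

theorem zpowIter_periodic {P : ℕ} {x : X} (hx : (⇑f)^[P] x = x) :
    Function.Periodic (fun n : ℤ => zpowIter f n x) P := fun n => by
  simp only [zpowIter_add, zpowIter_natCast, hx]

theorem IsPer.finite_zOrbit {x : X} (hx : IsPer f x) : (zOrbit f x).Finite := by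
  obtain ⟨P, hP, hPx⟩ := hx
  have hrange : zOrbit f x = Set.range (fun n : ℤ => zpowIter f n x) := rfl
  rw [hrange, ← (zpowIter_periodic hPx).image_Ioc (by exact_mod_cast hP) 0]
  exact (Set.finite_Ioc _ _).image _

theorem IsPer.exists_pos_forall_le_dist {x u : X} (hx : IsPer f x) (hu : u ∉ zOrbit f x) :
    ∃ d > 0, ∀ y ∈ zOrbit f x, d ≤ dist u y :=
  ⟨_, (hx.finite_zOrbit.isClosed.notMem_iff_infDist_pos ⟨x, mem_zOrbit_self f x⟩).1 hu,
    fun _ hy => Metric.infDist_le_dist_of_mem hy⟩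

theorem exists_lt_iterate_eq_of_mem_zOrbit {P : ℕ} {x y : X} (hP : 0 < P)
    (hx : (⇑f)^[P] x = x) (hy : y ∈ zOrbit f x) : ∃ γ < P, y = (⇑f)^[γ] x := by
  obtain ⟨n, rfl⟩ := hy
  obtain ⟨m, ⟨hm0, hmP⟩, hnm⟩ :=
    (zpowIter_periodic hx).exists_mem_Ico₀ (by exact_mod_cast hP) n
  refine ⟨m.toNat, by omega, ?_⟩
  rw [← zpowIter_natCast, Int.toNat_of_nonneg hm0]
  exact hnm

theorem exists_eq_zpowIter_of_forall_mem_zOrbit {h : X ≃ₜ X} (hcomm : Commute h f) {x : X}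
    (hx : h x ∈ zOrbit f x) (hcover : ∀ y, y ∈ zOrbit f x) : ∃ k : ℤ, ⇑h = zpowIter f k := by
  obtain ⟨k, hk⟩ := hx
  refine ⟨k, funext fun y => ?_⟩
  obtain ⟨m, rfl⟩ := hcover y
  rw [zpowIter_comm hcomm, ← hk, zpowIter_zpowIter_comm]

theorem eq_zpowIter_of_forall_dist_le {e : ℝ}
    (hsep : ∀ x y : X, x ≠ y → ∃ n : ℤ, e < dist (zpowIter f n x) (zpowIter f n y))
    {h : X ≃ₜ X} (hcomm : Commute h f) {k : ℤ}
    (hclose : ∀ x, dist (h x) (zpowIter f k x) ≤ e) : ⇑h = zpowIter f k := by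
  funext x
  by_contra hne
  obtain ⟨n, hn⟩ := hsep _ _ hne
  rw [← zpowIter_comm hcomm, zpowIter_zpowIter_comm] at hn
  linarith [hclose (zpowIter f n x)]

end Iterates

section Shadowing

variable {f h : X ≃ₜ X}

theorem notMem_Icc_of_shadow_marker (hcomm : Commute h f) {x₀ u Z : X} {d ε δ : ℝ}
    {n γ s : ℕ} (hfar : ∀ y ∈ zOrbit f x₀, d ≤ dist u y)
    (hinv : MapsTo h (zOrbit f x₀) (zOrbit f x₀))
    (hh : ∀ x y, dist x y < ε → dist (h x) (h y) < δ) (hεδ : ε + δ ≤ d)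
    (hbase : ∀ j ≤ n, dist ((⇑f)^[j] Z) ((⇑f)^[j] x₀) < ε)
    (hγ : h Z = (⇑f)^[γ] Z) (hs : dist ((⇑f)^[s] Z) u < ε) : s ∉ Set.Icc γ (γ + n) := by
  rintro ⟨hγs, hsn⟩
  obtain ⟨j, rfl⟩ := Nat.exists_eq_add_of_le hγs
  have hZj : h ((⇑f)^[j] Z) = (⇑f)^[γ + j] Z := by
    rw [← zpowIter_natCast f j, zpowIter_comm hcomm, hγ, zpowIter_natCast,
      ← Function.iterate_add_apply, add_comm]
  have hx₀j : h ((⇑f)^[j] x₀) ∈ zOrbit f x₀ := hinv ⟨j, congrFun (zpowIter_natCast f j) x₀⟩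
  have hfar_j := hfar _ hx₀j
  have hclose := hh _ _ (hbase j (by omega))
  have htri := dist_triangle u ((⇑f)^[γ + j] Z) (h ((⇑f)^[j] x₀))
  rw [dist_comm, ← hZj] at hs
  rw [← hZj] at htri
  linarith

theorem exists_natAbs_le_of_markers {Z : X} {n K P γ m₁ m₂ : ℕ}
    (hZ : (⇑f)^[P] Z = Z) (hγ : h Z = (⇑f)^[γ] Z) (hγP : γ < P)
    (hm₁ : m₁ ≤ n + K) (hm₂ : m₂ ≤ m₁ + n) (hP : P ≤ m₂ + K + 1)
    (h₁ : m₁ ∉ Set.Icc γ (γ + n)) (h₂ : m₂ ∉ Set.Icc γ (γ + n)) :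
    ∃ k : ℤ, k.natAbs ≤ K ∧ h Z = zpowIter f k Z := by
  simp only [Set.mem_Icc, not_and_or, not_le] at h₁ h₂
  -- a stretch of length `n` free of markers starts before `m₁ - n` or after `m₂`
  rcases (by omega : γ ≤ K ∨ P ≤ γ + K) with hγK | hγK
  · exact ⟨γ, by omega, by rw [hγ, zpowIter_natCast]⟩
  · refine ⟨γ - P, by omega, ?_⟩
    rw [hγ, ← zpowIter_natCast]
    exact ((zpowIter_periodic hZ).sub_eq _).symm

theorem dist_zpowIter_lt_of_shadow_iterate {Z y : X} {T S : ℕ} {ε : ℝ}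
    (hsh : ∀ j ≤ 2 * S, dist ((⇑f)^[j + T] Z) ((⇑f)^[j] (zpowIter f (-S) y)) < ε)
    (j : ℤ) (hj : j.natAbs ≤ S) :
    dist (zpowIter f j ((⇑f)^[S + T] Z)) (zpowIter f j y) < ε := by
  have hZ : zpowIter f j ((⇑f)^[S + T] Z) = (⇑f)^[(j + S).toNat + T] Z := by
    rw [← zpowIter_natCast, ← zpowIter_natCast, ← zpowIter_add]
    congr 1
    omega
  have hy : zpowIter f j y = (⇑f)^[(j + S).toNat] (zpowIter f (-S) y) := by
    rw [← zpowIter_natCast, ← zpowIter_add]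
    congr 1
    omega
  rw [hZ, hy]
  exact hsh _ (by omega)

theorem dist_lt_of_shadow_window {v w : X} {k : ℤ} {L S : ℕ} {ε e c₁ c₂ : ℝ}
    (hwin : ∀ j : ℤ, j.natAbs ≤ S → dist (zpowIter f j w) (zpowIter f j v) < ε)
    (hkLS : k.natAbs + L ≤ S) (hhw : h w = zpowIter f k w) (hεe : ε ≤ e)
    (hh : ∀ x y, dist x y < ε → dist (h x) (h y) < c₁)
    (hL : ∀ x y : X, (∀ j : ℤ, j.natAbs ≤ L → dist (zpowIter f j x) (zpowIter f j y) ≤ e) →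
      dist x y < c₂) :
    dist (h v) (zpowIter f k v) < c₁ + c₂ := by
  have hvw : dist (h v) (h w) < c₁ :=
    hh _ _ (by simpa [zpowIter_zero, dist_comm] using hwin 0 (by simp))
  have hkw : dist (zpowIter f k w) (zpowIter f k v) < c₂ := hL _ _ fun j hj => by
    rw [← zpowIter_add, ← zpowIter_add]
    exact (hwin _ (by omega)).le.trans hεe
  calc dist (h v) (zpowIter f k v) ≤ dist (h v) (h w) + dist (h w) (zpowIter f k v) :=
        dist_triangle _ _ _
    _ < c₁ + c₂ := add_lt_add hvw (by rw [hhw]; exact hkw)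

end Shadowing

section Gluing

variable {f : X ≃ₜ X}

def gluingSeed (f : X ≃ₜ X) (x₀ u : X) (v : ℕ → X) (r S : ℕ) : ℕ → X
  | 0 => x₀
  | 1 => u
  | i + 2 => if i < r then zpowIter f (-S) (v i) else u

def gluingLength (n₀ r S : ℕ) : ℕ → ℕ
  | 0 => n₀
  | 1 => 1
  | i + 2 => if i < r then 2 * S else 1

theorem one_le_gluingLength {n₀ r S : ℕ} (hn₀ : 1 ≤ n₀) (hS : 0 < S) :
    ∀ i, 1 ≤ gluingLength n₀ r S i
  | 0 => hn₀
  | 1 => le_rfl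
  | i + 2 => by simp only [gluingLength]; split_ifs <;> omega

theorem PeriodicGluing.exists_isPer (hglue : PeriodicGluing f) (y : X) : ∃ x, IsPer f x := by
  obtain ⟨K, -, hK⟩ := hglue 1 one_pos
  obtain ⟨p, z, -, -, hz⟩ := hK 0 (fun _ => y) (fun _ => 1) fun _ _ => le_rfl
  exact ⟨z, _, by simp, hz⟩

theorem PeriodicGluing.exists_marked_orbit (hglue : PeriodicGluing f) {ε : ℝ} (hε : 0 < ε) :
    ∃ K > 0, ∀ (x₀ u : X) (v : ℕ → X) (r S n₀ : ℕ), 0 < S → r * (2 * S + K) + K + 1 ≤ n₀ →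
      ∃ (Z : X) (P m₁ m₂ : ℕ) (w : ℕ → ℕ), (⇑f)^[P] Z = Z ∧ m₂ < P ∧
        (∀ j ≤ n₀, dist ((⇑f)^[j] Z) ((⇑f)^[j] x₀) < ε) ∧
        dist ((⇑f)^[m₁] Z) u < ε ∧ dist ((⇑f)^[m₂] Z) u < ε ∧
        m₁ ≤ n₀ + K ∧ m₂ ≤ m₁ + n₀ ∧ P ≤ m₂ + K + 1 ∧
        ∀ a < r, ∀ j : ℤ, j.natAbs ≤ S →
          dist (zpowIter f j ((⇑f)^[w a] Z)) (zpowIter f j (v a)) < ε := by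
  obtain ⟨K, hK, hglueK⟩ := hglue ε hε
  refine ⟨K, hK, fun x₀ u v r S n₀ hS hn₀ => ?_⟩
  obtain ⟨p, Z, hp, hsh, hZ⟩ := hglueK (r + 2) (gluingSeed f x₀ u v r S)
    (gluingLength n₀ r S) fun i _ => one_le_gluingLength (by omega) hS i
  set T : ℕ → ℕ := fun i => ∑ l ∈ Finset.range i, (gluingLength n₀ r S l + p l) with hT
  have hTsucc : ∀ i, T (i + 1) = T i + (gluingLength n₀ r S i + p i) :=
    fun i => Finset.sum_range_succ _ _
  have hTwin : ∀ a ≤ r, T (a + 2) ≤ T 2 + a * (2 * S + K) := by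
    intro a ha
    induction a with
    | zero => simp
    | succ a ih =>
      have hstep : T (a + 1 + 2) = T (a + 2) + (gluingLength n₀ r S (a + 2) + p (a + 2)) :=
        hTsucc (a + 2)
      simp only [gluingLength, if_pos (show a < r by omega)] at hstep
      have hpa := (hp (a + 2) (by omega)).2
      have := ih (by omega)
      rw [Nat.succ_mul]
      omega
  have hT1 : T 1 = n₀ + p 0 := by simp [hT, gluingLength]
  have hT2 : T 2 = T 1 + (1 + p 1) := hTsucc 1
  have hT3 : T (r + 3) = T (r + 2) + (1 + p (r + 2)) := by
    simpa only [gluingLength, lt_irrefl, if_false] using hTsucc (r + 2)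
  have hp0 := (hp 0 (by omega)).2
  have hp1 := (hp 1 (by omega)).2
  have hpr := (hp (r + 2) le_rfl).2
  have hTr := hTwin r le_rfl
  refine ⟨Z, T (r + 3), T 1, T (r + 2), fun a => S + T (a + 2), hZ, by omega, fun j hj => ?_,
    ?_, ?_, by omega, by omega, by omega, fun a ha => dist_zpowIter_lt_of_shadow_iterate ?_⟩
  · simpa only [Finset.range_zero, Finset.sum_empty, add_zero, gluingSeed] using
      hsh 0 (by omega) j hj
  · have hm₁ := hsh 1 (by omega) 0 (by omega)
    simp only [zero_add, Function.iterate_zero_apply, gluingSeed] at hm₁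
    exact hm₁
  · have hm₂ := hsh (r + 2) le_rfl 0 (by omega)
    simp only [zero_add, Function.iterate_zero_apply, gluingSeed, lt_irrefl, if_false] at hm₂
    exact hm₂
  · intro j hj
    have hwin := hsh (a + 2) (by omega) j (by simp only [gluingLength, if_pos ha]; exact hj)
    simp only [gluingSeed, if_pos ha] at hwin
    exact hwin

end Gluing

end

theorem exists_dist_lt_of_forall_natAbs_le {f : X ≃ₜ X} {e : ℝ}
    (hsep : ∀ x y : X, x ≠ y → ∃ n : ℤ, e < dist (zpowIter f n x) (zpowIter f n y))
    {ρ : ℝ} (hρ : 0 < ρ) :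
    ∃ L : ℕ, ∀ x y : X,
      (∀ j : ℤ, j.natAbs ≤ L → dist (zpowIter f j x) (zpowIter f j y) ≤ e) → dist x y < ρ := by
  set C : Set (X × X) := {p | ρ ≤ dist p.1 p.2}
  have hC : IsCompact C := (isClosed_le continuous_const continuous_dist).isCompact
  obtain ⟨t, ht⟩ := hC.elim_finite_subcover
    (fun n : ℤ => {p : X × X | e < dist (zpowIter f n p.1) (zpowIter f n p.2)})
    (fun n => isOpen_lt continuous_const
      (((continuous_zpowIter f n).comp continuous_fst).dist
        ((continuous_zpowIter f n).comp continuous_snd)))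
    (fun p hp => Set.mem_iUnion.2 (hsep _ _ fun heq => by simp [C, heq] at hp; linarith))
  refine ⟨t.sup Int.natAbs, fun x y hxy => ?_⟩
  by_contra hρxy
  obtain ⟨n, hn, hen⟩ := Set.mem_iUnion₂.1 (ht (show (x, y) ∈ C from not_lt.1 hρxy))
  exact absurd hen (not_lt.2 (hxy n (Finset.le_sup (f := Int.natAbs) hn)))

theorem exists_natAbs_le_forall_dist_lt {f h : X ≃ₜ X} {e c : ℝ}
    (hsep : ∀ x y : X, x ≠ y → ∃ n : ℤ, e < dist (zpowIter f n x) (zpowIter f n y))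
    (he : 0 < e) (hglue : PeriodicGluing f) (hcomm : Commute h f)
    (hper : ∀ x : X, IsPer f x → ⇑h '' zOrbit f x = zOrbit f x)
    {x₀ u : X} (hx₀ : IsPer f x₀) (hu : u ∉ zOrbit f x₀) (hc : 0 < c) :
    ∃ K : ℕ, ∀ (r : ℕ) (v : ℕ → X), ∃ k : ℤ, k.natAbs ≤ K ∧
      ∀ a < r, dist (h (v a)) (zpowIter f k (v a)) < c := by
  obtain ⟨d, hd, hfar⟩ := hx₀.exists_pos_forall_le_dist hu
  obtain ⟨L, hL⟩ := exists_dist_lt_of_forall_natAbs_le hsep (half_pos hc)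
  obtain ⟨δ, hδ, hhδ⟩ := Metric.uniformContinuous_iff.1
    (CompactSpace.uniformContinuous_of_continuous h.continuous) _
    (lt_min (half_pos hc) (half_pos hd))
  set ε := min (min δ e) (d / 2)
  have hh : ∀ x y, dist x y < ε → dist (h x) (h y) < min (c / 2) (d / 2) :=
    fun x y hxy => hhδ (hxy.trans_le ((min_le_left _ _).trans (min_le_left _ _)))
  obtain ⟨K, hK, hmarked⟩ := hglue.exists_marked_orbit (lt_min (lt_min hδ he) (half_pos hd))
  refine ⟨K, fun r v => ?_⟩
  obtain ⟨Z, P, m₁, m₂, w, hZ, hm₂P, hbase, hm₁u, hm₂u, hm₁, hm₂, hP, hwin⟩ :=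
    hmarked x₀ u v r (K + L) _ (by omega) le_rfl
  obtain ⟨γ, hγP, hγ⟩ := exists_lt_iterate_eq_of_mem_zOrbit (by omega) hZ
    (hper Z ⟨P, by omega, hZ⟩ ▸ Set.mem_image_of_mem h (mem_zOrbit_self f Z))
  have hmarker := fun s (hs : dist ((⇑f)^[s] Z) u < ε) =>
    notMem_Icc_of_shadow_marker hcomm hfar (Set.mapsTo_iff_image_subset.2 (hper x₀ hx₀).subset)
      (fun x y hxy => (hh x y hxy).trans_le (min_le_right _ _))
      (by linarith [min_le_right (min δ e) (d / 2)]) hbase hγ hs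
  obtain ⟨k, hk, hkZ⟩ := exists_natAbs_le_of_markers hZ hγ hγP hm₁ hm₂ hP
    (hmarker _ hm₁u) (hmarker _ hm₂u)
  refine ⟨k, hk, fun a ha => ?_⟩
  have hwa : h ((⇑f)^[w a] Z) = zpowIter f k ((⇑f)^[w a] Z) := by
    rw [← zpowIter_natCast, zpowIter_comm hcomm, hkZ, zpowIter_zpowIter_comm]
  have := dist_lt_of_shadow_window (hwin a ha) (by omega) hwa
    ((min_le_left _ _).trans (min_le_right _ _))
    (fun x y hxy => (hh x y hxy).trans_le (min_le_left _ _)) hL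
  linarith

/-- Theorem A: an expansive homeomorphism with the periodic gluing orbit property has
`h = f^k` for any commuting homeomorphism `h` preserving every periodic orbit of `f`. -/
theorem expansive_gluing_centralizer_is_power
    (f h : X ≃ₜ X) (hexp : Expansive f) (hglue : PeriodicGluing f)
    (hcomm : ⇑h ∘ ⇑f = ⇑f ∘ ⇑h)
    (hper : ∀ x : X, IsPer f x → ⇑h '' zOrbit f x = zOrbit f x) :
    ∃ k : ℤ, ⇑h = zpowIter f k := by
  obtain ⟨e, he, hsep⟩ := hexp
  have hcomm' : Commute h f := Homeomorph.ext (congrFun hcomm)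
  rcases isEmpty_or_nonempty X with hX | ⟨⟨y⟩⟩
  · exact ⟨0, funext fun x => isEmptyElim x⟩
  obtain ⟨x₀, hx₀⟩ := hglue.exists_isPer y
  have hhx₀ : h x₀ ∈ zOrbit f x₀ := hper x₀ hx₀ ▸ Set.mem_image_of_mem h (mem_zOrbit_self f x₀)
  by_cases hcover : ∀ u, u ∈ zOrbit f x₀
  · exact exists_eq_zpowIter_of_forall_mem_zOrbit hcomm' hhx₀ hcover
  push Not at hcover
  obtain ⟨u, hu⟩ := hcover
  obtain ⟨K, hK⟩ := exists_natAbs_le_forall_dist_lt hsep he hglue hcomm' hper hx₀ hu he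
  obtain ⟨k, hk⟩ := exists_forall_of_forall_finite_family
    (P := fun k x => dist (h x) (zpowIter f k x) < e) hK
  exact ⟨k, eq_zpowIter_of_forall_dist_le hsep hcomm' fun x => (hk x).le⟩
end

section
/- For the commuting hyperbolic matrices A = [[0,1,1],[2,1,0],[1,0,−1]] and B = [[2,1,1],[2,3,0],[1,0,1]] in SL(3,ℤ), there exist no nonzero integers m, n with A^n = B^m. -/
open Matrix

private lemma eig_pow {R : Type*} [Field R]
    (u : (Matrix (Fin 3) (Fin 3) R)ˣ) (c : R) (w : Fin 3 → R)
    (h : (u : Matrix (Fin 3) (Fin 3) R).mulVec w = c • w) :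
    ∀ k : ℕ, ((u ^ k : (Matrix (Fin 3) (Fin 3) R)ˣ) : Matrix (Fin 3) (Fin 3) R).mulVec w
      = c ^ k • w := by
  intro k
  induction k with
  | zero => simp
  | succ k ih =>
      rw [pow_succ, Units.val_mul, ← Matrix.mulVec_mulVec, h, Matrix.mulVec_smul, ih,
        smul_smul, pow_succ, mul_comm]

private lemma eig_inv {R : Type*} [Field R]
    (u : (Matrix (Fin 3) (Fin 3) R)ˣ) (c : R) (hc : c ≠ 0) (w : Fin 3 → R)
    (h : (u : Matrix (Fin 3) (Fin 3) R).mulVec w = c • w) :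
    ((u⁻¹ : (Matrix (Fin 3) (Fin 3) R)ˣ) : Matrix (Fin 3) (Fin 3) R).mulVec w = c⁻¹ • w := by
  have h1 : ((u⁻¹ : (Matrix (Fin 3) (Fin 3) R)ˣ) : Matrix (Fin 3) (Fin 3) R).mulVec
      ((u : Matrix (Fin 3) (Fin 3) R).mulVec w) = w := by
    rw [Matrix.mulVec_mulVec, Units.inv_mul, Matrix.one_mulVec]
  rw [h, Matrix.mulVec_smul] at h1
  calc ((u⁻¹ : (Matrix (Fin 3) (Fin 3) R)ˣ) : Matrix (Fin 3) (Fin 3) R).mulVec w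
      = c⁻¹ • (c • ((u⁻¹ : (Matrix (Fin 3) (Fin 3) R)ˣ) : Matrix (Fin 3) (Fin 3) R).mulVec w) := by
        rw [smul_smul, inv_mul_cancel₀ hc, one_smul]
    _ = c⁻¹ • w := by rw [h1]

private lemma eig_zpow {R : Type*} [Field R]
    (u : (Matrix (Fin 3) (Fin 3) R)ˣ) (c : R) (hc : c ≠ 0) (w : Fin 3 → R)
    (h : (u : Matrix (Fin 3) (Fin 3) R).mulVec w = c • w) :
    ∀ k : ℤ, ((u ^ k : (Matrix (Fin 3) (Fin 3) R)ˣ) : Matrix (Fin 3) (Fin 3) R).mulVec w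
      = c ^ k • w := by
  intro k
  cases k with
  | ofNat k => simpa using eig_pow u c w h k
  | negSucc k =>
      rw [zpow_negSucc, ← inv_pow, zpow_negSucc, ← inv_pow]
      exact eig_pow u⁻¹ c⁻¹ w (eig_inv u c hc w h) (k + 1)

/-- From a common power relation over ℝ, every root `lam` of `x^3 - 4x - 1` satisfies
`lam ^ n = (lam + 2) ^ m`. -/
private lemma abs_zpow' (a : ℝ) (n : ℤ) : |a ^ n| = |a| ^ n :=
  map_zpow₀ (absHom : ℝ →*₀ ℝ) a n

private lemma key (U V : (Matrix (Fin 3) (Fin 3) ℝ)ˣ)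
    (hU : (U : Matrix (Fin 3) (Fin 3) ℝ) = !![0, 1, 1; 2, 1, 0; 1, 0, -1])
    (hV : (V : Matrix (Fin 3) (Fin 3) ℝ) = !![2, 1, 1; 2, 3, 0; 1, 0, 1])
    (lam : ℝ) (hl : lam ^ 3 = 4 * lam + 1) (hl1 : lam ≠ 1)
    (n m : ℤ) (h : U ^ n = V ^ m) : lam ^ n = (lam + 2) ^ m := by
  have hlam0 : lam ≠ 0 := by rintro rfl; norm_num at hl
  have hlam2 : lam + 2 ≠ 0 := by
    intro h2
    have : lam = -2 := by linarith
    rw [this] at hl; norm_num at hl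
  set w : Fin 3 → ℝ := ![lam ^ 2 - 1, 2 * lam + 2, lam - 1] with hw
  have hUe : (U : Matrix (Fin 3) (Fin 3) ℝ).mulVec w = lam • w := by
    rw [hU]
    funext i
    fin_cases i <;>
      simp [hw, Matrix.mulVec, dotProduct, Fin.sum_univ_three] <;> nlinarith [hl]
  have hVe : (V : Matrix (Fin 3) (Fin 3) ℝ).mulVec w = (lam + 2) • w := by
    rw [hV]
    funext i
    fin_cases i <;>
      simp [hw, Matrix.mulVec, dotProduct, Fin.sum_univ_three] <;> nlinarith [hl]
  have hn := eig_zpow U lam hlam0 w hUe n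
  have hm := eig_zpow V (lam + 2) hlam2 w hVe m
  rw [h, hm] at hn
  have h2 : (lam + 2) ^ m * (lam - 1) = lam ^ n * (lam - 1) := congrFun hn 2
  have hne : lam - 1 ≠ 0 := sub_ne_zero.mpr hl1
  exact (mul_right_cancel₀ hne h2).symm

/-- There are no nonzero integers `n, m` with `A^n = B^m` (powers taken in the group of
invertible matrices over `ℚ`). -/
theorem no_common_power_A_B
    (u v : (Matrix (Fin 3) (Fin 3) ℚ)ˣ)
    (hu : (u : Matrix (Fin 3) (Fin 3) ℚ) =
      (!![0, 1, 1; 2, 1, 0; 1, 0, -1] : Matrix (Fin 3) (Fin 3) ℤ).map (Int.cast : ℤ → ℚ))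
    (hv : (v : Matrix (Fin 3) (Fin 3) ℚ) =
      (!![2, 1, 1; 2, 3, 0; 1, 0, 1] : Matrix (Fin 3) (Fin 3) ℤ).map (Int.cast : ℤ → ℚ)) :
    ∀ n m : ℤ, n ≠ 0 → m ≠ 0 → u ^ n ≠ v ^ m := by
  intro n m hn hm heq
  -- transfer to ℝ
  set f : Matrix (Fin 3) (Fin 3) ℚ →* Matrix (Fin 3) (Fin 3) ℝ :=
    ((algebraMap ℚ ℝ).mapMatrix : Matrix (Fin 3) (Fin 3) ℚ →+* Matrix (Fin 3) (Fin 3) ℝ).toMonoidHom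
  set U := Units.map f u with hUdef
  set V := Units.map f v with hVdef
  have hU : (U : Matrix (Fin 3) (Fin 3) ℝ) = !![0, 1, 1; 2, 1, 0; 1, 0, -1] := by
    show f (u : Matrix (Fin 3) (Fin 3) ℚ) = _
    rw [hu]
    ext i j
    fin_cases i <;> fin_cases j <;>
      simp [f, RingHom.mapMatrix_apply, Matrix.map_apply] <;> norm_num
  have hV : (V : Matrix (Fin 3) (Fin 3) ℝ) = !![2, 1, 1; 2, 3, 0; 1, 0, 1] := by
    show f (v : Matrix (Fin 3) (Fin 3) ℚ) = _
    rw [hv]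
    ext i j
    fin_cases i <;> fin_cases j <;>
      simp [f, RingHom.mapMatrix_apply, Matrix.map_apply] <;> norm_num
  have heqR : U ^ n = V ^ m := by
    rw [hUdef, hVdef, ← map_zpow, ← map_zpow, heq]
  -- a root in [2,3]
  have hcont : Continuous fun x : ℝ => x ^ 3 - 4 * x - 1 := by continuity
  obtain ⟨lam, hlamI, hlam⟩ : ∃ x ∈ Set.Icc (2 : ℝ) 3, x ^ 3 - 4 * x - 1 = 0 := by
    have := intermediate_value_Icc (by norm_num : (2:ℝ) ≤ 3) (hcont.continuousOn)
    have h0 : (0 : ℝ) ∈ Set.Icc ((2:ℝ) ^ 3 - 4 * 2 - 1) ((3:ℝ) ^ 3 - 4 * 3 - 1) := by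
      norm_num
    obtain ⟨x, hx, hx0⟩ := this h0
    exact ⟨x, hx, hx0⟩
  -- a root in [-1/2, 0]
  obtain ⟨mu, hmuI, hmu⟩ : ∃ x ∈ Set.Icc (-(1:ℝ)/2) 0, x ^ 3 - 4 * x - 1 = 0 := by
    have := intermediate_value_Icc' (by norm_num : (-(1:ℝ)/2) ≤ 0) (hcont.continuousOn)
    have h0 : (0 : ℝ) ∈ Set.Icc ((0:ℝ) ^ 3 - 4 * 0 - 1) ((-(1:ℝ)/2) ^ 3 - 4 * (-(1:ℝ)/2) - 1) := by
      norm_num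
    obtain ⟨x, hx, hx0⟩ := this h0
    exact ⟨x, hx, hx0⟩
  have hlam2 : (2:ℝ) ≤ lam := hlamI.1
  have hmuneg : mu < 0 := by
    rcases lt_or_eq_of_le hmuI.2 with h | h
    · exact h
    · rw [h] at hmu; norm_num at hmu
  have hmulow : -(1:ℝ)/2 ≤ mu := hmuI.1
  have h1 := key U V hU hV lam (by linarith [hlam]) (by intro h; rw [h] at hlam; norm_num at hlam)
    n m heqR
  have h2 := key U V hU hV mu (by linarith [hmu]) (by intro h; rw [h] at hmu; norm_num at hmu)
    n m heqR
  -- |mu|^n = (mu+2)^m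
  have hmu2pos : (1:ℝ) < mu + 2 := by linarith
  have habs : |mu| ^ n = (mu + 2) ^ m := by
    have h3 : |mu ^ n| = |(mu + 2) ^ m| := congrArg (fun x : ℝ => |x|) h2
    rwa [abs_zpow', abs_zpow', abs_of_pos (by linarith : (0:ℝ) < mu + 2)] at h3
  have habs0 : (0:ℝ) < |mu| := abs_pos.mpr (ne_of_lt hmuneg)
  have habs1 : |mu| < 1 := by rw [abs_of_neg hmuneg]; linarith
  have hlam1 : (1:ℝ) < lam := by linarith
  have hlam21 : (1:ℝ) < lam + 2 := by linarith
  rcases lt_or_gt_of_ne hn with hneg | hpos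
  · -- n < 0 : lam^n < 1 so m < 0 ; |mu|^n > 1 so m > 0
    have hml : (lam + 2) ^ m < 1 := h1 ▸ zpow_lt_one_of_neg₀ hlam1 hneg
    have hm1 : m < 0 := by
      by_contra h
      push_neg at h
      rcases eq_or_lt_of_le h with h' | h'
      · rw [← h'] at hml; simp at hml
      · exact absurd hml (not_lt.mpr (le_of_lt (one_lt_zpow₀ hlam21 h')))
    have hmg : (1:ℝ) < (mu + 2) ^ m := habs ▸ one_lt_zpow_of_neg₀ habs0 habs1 hneg
    have : (mu + 2) ^ m < 1 := zpow_lt_one_of_neg₀ hmu2pos hm1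
    linarith
  · -- n > 0 : lam^n > 1 so m > 0 ; |mu|^n < 1 so m < 0
    have hml : (1:ℝ) < (lam + 2) ^ m := h1 ▸ one_lt_zpow₀ hlam1 hpos
    have hm1 : 0 < m := by
      by_contra h
      push_neg at h
      rcases eq_or_lt_of_le h with h' | h'
      · rw [h'] at hml; simp at hml
      · exact absurd hml (not_lt.mpr (le_of_lt (zpow_lt_one_of_neg₀ hlam21 h')))
    have hmg : (mu + 2) ^ m < 1 := habs ▸ zpow_lt_one₀ habs0 habs1 hpos
    have : (1:ℝ) < (mu + 2) ^ m := one_lt_zpow₀ hmu2pos hm1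
    linarith
end

section
/- A matrix B ∈ GL(3,ℤ) commutes with A = [[0,1,1],[2,1,0],[1,0,−1]] if and only if B has the form [[c₁+2c₂+c₃, c₁+2c₂, c₁],[2c₁+4c₂, 2c₁+3c₂+c₃, 2c₂],[c₁, c₂, c₃]] for some integers c₁, c₂, c₃. -/
/-!
The matrices of the stated form are `c₁ (A + 1) + c₂ (A² + A - 1) + c₃`, i.e. exactly the
integer polynomials in `A`, and these commute with `A`. Conversely, the rows `e₃, e₃ A, e₃ A²`
span `ℤ³`, so a matrix commuting with `A` is determined by its last row `(c₁, c₂, c₃)`, which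
it shares with the polynomial in `A` of that form.
-/

open Matrix Polynomial

theorem Polynomial.commute_aeval_self {R S : Type*} [CommSemiring R] [Semiring S] [Algebra R S]
    (a : S) (p : R[X]) : Commute a (aeval a p) := by
  simpa using (Commute.all X p).map (aeval a)

namespace Matrix

variable {n R : Type*} [Fintype n] [DecidableEq n] [CommRing R]

theorem vecMul_pow_vecMul_eq_zero {A M : Matrix n n R} (hAM : Commute A M) {v : n → R}
    (hv : v ᵥ* M = 0) (k : ℕ) : v ᵥ* A ^ k ᵥ* M = 0 := by
  rw [vecMul_vecMul, (hAM.pow_left k).eq, ← vecMul_vecMul, hv, zero_vecMul]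

theorem eq_zero_of_commute_of_vecMul_eq_zero {A M : Matrix n n R} (hAM : Commute A M)
    {v : n → R} (hcyc : Submodule.span R (Set.range fun k : ℕ => v ᵥ* A ^ k) = ⊤)
    (hv : v ᵥ* M = 0) : M = 0 := by
  have hzero : vecMulLinear M = 0 :=
    LinearMap.ext_on_range hcyc fun k => vecMul_pow_vecMul_eq_zero hAM hv k
  ext i j
  simpa using congrFun (LinearMap.congr_fun hzero (Pi.single i 1)) j

theorem eq_of_commute_of_vecMul_eq {A B C : Matrix n n R} (hB : Commute A B) (hC : Commute A C)
    {v : n → R} (hcyc : Submodule.span R (Set.range fun k : ℕ => v ᵥ* A ^ k) = ⊤)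
    (hv : v ᵥ* B = v ᵥ* C) : B = C :=
  sub_eq_zero.mp <| eq_zero_of_commute_of_vecMul_eq_zero (hB.sub_right hC) hcyc <| by
    rw [vecMul_sub, hv, sub_self]

end Matrix

namespace CentralizerOfA

def A : Matrix (Fin 3) (Fin 3) ℤ := !![0, 1, 1; 2, 1, 0; 1, 0, -1]

theorem span_single_two_vecMul_pow_eq_top :
    Submodule.span ℤ (Set.range fun k : ℕ => Pi.single 2 1 ᵥ* A ^ k) = ⊤ := by
  refine Submodule.eq_top_iff'.mpr fun w => ?_
  have hw : w = (w 0 - w 1 + w 2) • (Pi.single 2 1 ᵥ* A ^ 0)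
      + (w 0 + w 1) • (Pi.single 2 1 ᵥ* A ^ 1) + w 1 • (Pi.single 2 1 ᵥ* A ^ 2) := by
    ext j
    fin_cases j <;> simp [A, sq, vecHead, vecTail, -zsmul_eq_mul]
    ring
  rw [hw]
  exact add_mem (add_mem (Submodule.smul_mem _ _ (Submodule.subset_span ⟨0, rfl⟩))
    (Submodule.smul_mem _ _ (Submodule.subset_span ⟨1, rfl⟩)))
    (Submodule.smul_mem _ _ (Submodule.subset_span ⟨2, rfl⟩))

theorem form_eq_aeval (c₁ c₂ c₃ : ℤ) :
    !![c₁ + 2 * c₂ + c₃, c₁ + 2 * c₂, c₁;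
       2 * c₁ + 4 * c₂, 2 * c₁ + 3 * c₂ + c₃, 2 * c₂;
       c₁, c₂, c₃] = aeval A (C c₁ * (X + 1) + C c₂ * (X ^ 2 + X - 1) + C c₃) := by
  simp only [map_add, map_sub, map_mul, map_pow, aeval_C, aeval_X, map_one,
    Algebra.algebraMap_eq_smul_one, smul_mul_assoc, one_mul]
  ext i j
  fin_cases i <;> fin_cases j <;> simp [A, sq, Matrix.intCast_apply, -zsmul_eq_mul] <;> ring

end CentralizerOfA

open CentralizerOfA in
/-- An integer matrix `B` commutes with `A = !![0,1,1; 2,1,0; 1,0,-1]` if and only if it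
has the stated three-parameter form. -/
theorem centralizer_of_A_characterization (B : Matrix (Fin 3) (Fin 3) ℤ) :
    (!![0, 1, 1; 2, 1, 0; 1, 0, -1] : Matrix (Fin 3) (Fin 3) ℤ) * B =
      B * (!![0, 1, 1; 2, 1, 0; 1, 0, -1] : Matrix (Fin 3) (Fin 3) ℤ) ↔
    ∃ c₁ c₂ c₃ : ℤ, B =
      !![c₁ + 2 * c₂ + c₃, c₁ + 2 * c₂, c₁;
         2 * c₁ + 4 * c₂, 2 * c₁ + 3 * c₂ + c₃, 2 * c₂;
         c₁, c₂, c₃] := by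
  change Commute A B ↔ _
  constructor
  · intro hAB
    refine ⟨B 2 0, B 2 1, B 2 2, ?_⟩
    rw [form_eq_aeval]
    refine eq_of_commute_of_vecMul_eq hAB (commute_aeval_self A _)
      span_single_two_vecMul_pow_eq_top ?_
    rw [← form_eq_aeval, single_one_vecMul, single_one_vecMul]
    ext j
    fin_cases j <;> rfl
  · rintro ⟨c₁, c₂, c₃, rfl⟩
    rw [form_eq_aeval]
    exact commute_aeval_self A _
end
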